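/- arXiv:2310.12934 — 2 statements merged into one kernel-verified Lean document; each statement's English description precedes it below -/
import Mathlib

section
/- In the MDP M_G constructed from DAG G, backward policy P_B, and GFlowNet reward R, for any policy π, the entropy-regularized value at the initial state satisfies V^π₁(s₀) = log Z − KL(q^π ‖ P_B), where q^π(τ) = ∏_{i=1}^{n_τ} π(s_i|s_{i-1}) is the trajectory distribution induced by π, P_B(τ) = (R(s_{n_τ})/Z) ∏_{i=1}^{n_τ} P_B(s_{i-1}|s_i) is the trajectory distribution induced by P_B and R, and Z = Σ_x R(x) (with R extended by backward sums). -/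
/- Common setup: finite DAGs, policies, trajectories, GFlowNet notions. -/

noncomputable section
open scoped Classical
open Finset Real

/-- A finite DAG with a distinguished initial state `s0`. Acyclicity is witnessed
by a rank function that strictly increases along edges. -/
structure FinDAG (S : Type) [Fintype S] where
  edge : S → S → Prop
  rank : S → ℕ
  rank_lt : ∀ ⦃s s'⦄, edge s s' → rank s < rank s'
  s0 : S

variable {S : Type} [Fintype S]

namespace FinDAG

/-- A state is terminal iff it has no outgoing edges. -/
def Terminal (G : FinDAG S) (s : S) : Prop := ∀ s', ¬ G.edge s s'

/-- The children of a state. -/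
def children (G : FinDAG S) (s : S) : Finset S := Finset.univ.filter fun s' => G.edge s s'

/-- The parents of a state. -/
def parents (G : FinDAG S) (s' : S) : Finset S := Finset.univ.filter fun s => G.edge s s'

/-- The set of terminal states `X`. -/
def X (G : FinDAG S) : Finset S := Finset.univ.filter fun x => G.Terminal x

/-- `PB` is a (full-support) backward policy: positive exactly on edges, and for each
state with parents, the probabilities of its parents sum to one. -/
structure IsBackward (G : FinDAG S) (PB : S → S → ℝ) : Prop where
  pos : ∀ s s', G.edge s s' → 0 < PB s s'
  supp : ∀ s s', ¬ G.edge s s' → PB s s' = 0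
  sum_one : ∀ s', (G.parents s').Nonempty → ∑ s ∈ G.parents s', PB s s' = 1

/-- `PF` is a (full-support) forward policy: positive exactly on edges, and for each
non-terminal state the probabilities of its children sum to one. -/
structure IsForward (G : FinDAG S) (PF : S → S → ℝ) : Prop where
  pos : ∀ s s', G.edge s s' → 0 < PF s s'
  supp : ∀ s s', ¬ G.edge s s' → PF s s' = 0
  sum_one : ∀ s, ¬ G.Terminal s → ∑ s' ∈ G.children s, PF s s' = 1

/-- A complete trajectory: starts at `s0`, follows edges and ends in a terminal state. -/
def IsTraj (G : FinDAG S) (τ : List S) : Prop :=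
  τ.head? = some G.s0 ∧ τ.Chain' G.edge ∧ G.Terminal (τ.getLastD G.s0)

/-- The terminal state `x_τ` reached by a trajectory. -/
def lastState (G : FinDAG S) (τ : List S) : S := τ.getLastD G.s0

/-- A Markovian flow `F` induced by the backward policy `PB` and reward `R`:
`F(x) = R(x)` on terminal states, and `F(s) = ∑_{s'} P_B(s|s') F(s')`
(the edge flow being `F(s→s') = P_B(s|s') F(s')`). -/
def IsFlow (G : FinDAG S) (PB : S → S → ℝ) (R : S → ℝ) (F : S → ℝ) : Prop :=
  (∀ x, G.Terminal x → F x = R x) ∧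
  (∀ s, ¬ G.Terminal s → F s = ∑ s' ∈ G.children s, PB s s' * F s')

/-- `V` solves the soft Bellman optimality equations (λ = 1) of the MDP `M_G`
with rewards `r(s,s') = log P_B(s|s')` on interior edges and `log R(x)` at the
terminal transition `x → s_f` (so `V(x) = log R(x)`). -/
def IsSoftValue (G : FinDAG S) (PB : S → S → ℝ) (R : S → ℝ) (V : S → ℝ) : Prop :=
  (∀ x, G.Terminal x → V x = Real.log (R x)) ∧
  (∀ s, ¬ G.Terminal s →
    V s = Real.log (∑ s' ∈ G.children s, Real.exp (Real.log (PB s s') + V s')))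

/-- The softmax-optimal policy `π*(s'|s) = exp(r(s,s') + V(s') − V(s))`. -/
def softOpt (G : FinDAG S) (PB : S → S → ℝ) (V : S → ℝ) (s s' : S) : ℝ :=
  if G.edge s s' then Real.exp (Real.log (PB s s') + V s' - V s) else 0

end FinDAG

/-- Product of `f` over consecutive pairs of the list `τ`. -/
def pathProd (f : S → S → ℝ) (τ : List S) : ℝ :=
  ((τ.zip τ.tail).map fun p => f p.1 p.2).prod

/-- Sum of `f` over consecutive pairs of the list `τ`. -/
def pathSum (f : S → S → ℝ) (τ : List S) : ℝ :=
  ((τ.zip τ.tail).map fun p => f p.1 p.2).sum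

/-- The entropy-regularized (λ = 1) value of a policy `π` at `s₀` in `M_G`, written as an
expectation over complete trajectories: the sum of MDP rewards
`∑_t r(s_t,s_{t+1}) = ∑ log P_B + log R(x_τ)` plus the total entropy
`E[∑_t H(π(·|s_t))] = E[− log q^π(τ)]` (chain rule for entropy). -/
def regValue {S : Type} [Fintype S] (G : FinDAG S) (PB : S → S → ℝ) (R : S → ℝ)
    (pol : S → S → ℝ) (T : Finset (List S)) : ℝ :=
  ∑ τ ∈ T, pathProd pol τ *
    ((pathSum (fun s s' => Real.log (PB s s')) τ + Real.log (R (G.lastState τ)))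
      - Real.log (pathProd pol τ))


/-! ### Auxiliary lemmas -/

set_option linter.unusedSectionVars false

lemma pathProd_single (f : S → S → ℝ) (s : S) : pathProd f [s] = 1 := by simp [pathProd]

lemma pathProd_cons (f : S → S → ℝ) (s a : S) (t : List S) :
    pathProd f (s :: a :: t) = f s a * pathProd f (a :: t) := by simp [pathProd]

lemma pathSum_cons (f : S → S → ℝ) (s a : S) (t : List S) :
    pathSum f (s :: a :: t) = f s a + pathSum f (a :: t) := by simp [pathSum]

lemma pathProd_pos (G : FinDAG S) (f : S → S → ℝ)
    (hf : ∀ s s', G.edge s s' → 0 < f s s') :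
    ∀ τ : List S, τ.Chain' G.edge → 0 < pathProd f τ := by
  intro τ
  induction τ with
  | nil => intro _; simp [pathProd]
  | cons a t ih =>
    cases t with
    | nil => intro _; simp [pathProd]
    | cons b t' =>
      intro hc
      simp only [List.Chain', List.isChain_cons_cons] at hc
      rw [pathProd_cons]
      exact mul_pos (hf _ _ hc.1) (ih hc.2)

lemma pathSum_log (G : FinDAG S) (f : S → S → ℝ)
    (hf : ∀ s s', G.edge s s' → 0 < f s s') :
    ∀ τ : List S, τ.Chain' G.edge →
      pathSum (fun s s' => Real.log (f s s')) τ = Real.log (pathProd f τ) := by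
  intro τ
  induction τ with
  | nil => intro _; simp [pathSum, pathProd]
  | cons a t ih =>
    cases t with
    | nil => intro _; simp [pathSum, pathProd]
    | cons b t' =>
      intro hc
      simp only [List.Chain', List.isChain_cons_cons] at hc
      rw [pathSum_cons, pathProd_cons, ih hc.2,
        Real.log_mul (ne_of_gt (hf _ _ hc.1))
          (ne_of_gt (pathProd_pos G f hf _ hc.2))]

/-- The (finite) set of complete trajectories starting at `s`. -/
def trajFinset (G : FinDAG S) (s : S) : Finset (List S) :=
  if h : G.Terminal s then {[s]}
  else (G.children s).attach.biUnion fun s' => (trajFinset G s'.1).image (List.cons s)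
termination_by (Finset.univ.sup G.rank + 1) - G.rank s
decreasing_by
  have he : G.edge s s'.1 := by
    have := s'.2
    simp only [FinDAG.children, Finset.mem_filter] at this
    exact this.2
  have h1 := G.rank_lt he
  have h2 : G.rank s'.1 ≤ Finset.univ.sup G.rank := Finset.le_sup (Finset.mem_univ _)
  omega

lemma mem_trajFinset (G : FinDAG S) (s : S) (τ : List S) :
    τ ∈ trajFinset G s ↔
      (τ.head? = some s ∧ τ.Chain' G.edge ∧ G.Terminal (τ.getLastD G.s0)) := by
  have key : ∀ n u, (Finset.univ.sup G.rank + 1) - G.rank u ≤ n → ∀ τ : List S,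
      (τ ∈ trajFinset G u ↔
        (τ.head? = some u ∧ τ.Chain' G.edge ∧ G.Terminal (τ.getLastD G.s0))) := by
    intro n
    induction n with
    | zero =>
      intro u hu
      have : G.rank u ≤ Finset.univ.sup G.rank := Finset.le_sup (Finset.mem_univ _)
      omega
    | succ n ih =>
      intro u hu τ
      rw [trajFinset]
      by_cases h : G.Terminal u
      · simp only [dif_pos h, Finset.mem_singleton]
        constructor
        · rintro rfl
          exact ⟨rfl, List.isChain_singleton _, by simpa using h⟩
        · rintro ⟨h1, h2, h3⟩
          cases τ with
          | nil => simp at h1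
          | cons a t =>
            have ha : a = u := by simpa using h1
            subst ha
            cases t with
            | nil => rfl
            | cons b t' =>
              simp only [List.Chain', List.isChain_cons_cons] at h2
              exact absurd h2.1 (h b)
      · simp only [dif_neg h, Finset.mem_biUnion, Finset.mem_attach, Finset.mem_image,
          true_and, Subtype.exists]
        constructor
        · rintro ⟨s', hs', τ', hτ', rfl⟩
          have hedge : G.edge u s' := by
            simp only [FinDAG.children, Finset.mem_filter] at hs'
            exact hs'.2
          have hmeas : (Finset.univ.sup G.rank + 1) - G.rank s' ≤ n := by
            have h1 := G.rank_lt hedge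
            have h2 : G.rank s' ≤ Finset.univ.sup G.rank := Finset.le_sup (Finset.mem_univ _)
            omega
          obtain ⟨e1, e2, e3⟩ := (ih s' hmeas τ').mp hτ'
          cases τ' with
          | nil => simp at e1
          | cons b t =>
            have hb : b = s' := by simpa using e1
            subst hb
            refine ⟨rfl, ?_, ?_⟩
            · simp only [List.Chain', List.isChain_cons_cons]; exact ⟨hedge, e2⟩
            · simpa [List.getLastD_cons] using e3
        · rintro ⟨h1, h2, h3⟩
          cases τ with
          | nil => simp at h1
          | cons a t =>
            have ha : a = u := by simpa using h1
            subst ha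
            cases t with
            | nil =>
              exact absurd (by simpa using h3) h
            | cons b t' =>
              simp only [List.Chain', List.isChain_cons_cons] at h2
              have hedge : G.edge a b := h2.1
              have hmeas : (Finset.univ.sup G.rank + 1) - G.rank b ≤ n := by
                have h1' := G.rank_lt hedge
                have h2' : G.rank b ≤ Finset.univ.sup G.rank := Finset.le_sup (Finset.mem_univ _)
                omega
              refine ⟨b, ?_, b :: t', ?_, rfl⟩
              · simp only [FinDAG.children, Finset.mem_filter]
                exact ⟨Finset.mem_univ _, hedge⟩
              · exact (ih b hmeas (b :: t')).mpr
                  ⟨rfl, h2.2, by simpa [List.getLastD_cons] using h3⟩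
  exact key ((Finset.univ.sup G.rank + 1) - G.rank s) s le_rfl τ

lemma sum_trajFinset (G : FinDAG S) (pol : S → S → ℝ) (hpol : G.IsForward pol) (s : S) :
    ∑ τ ∈ trajFinset G s, pathProd pol τ = 1 := by
  have key : ∀ n u, (Finset.univ.sup G.rank + 1) - G.rank u ≤ n →
      ∑ τ ∈ trajFinset G u, pathProd pol τ = 1 := by
    intro n
    induction n with
    | zero =>
      intro u hu
      have : G.rank u ≤ Finset.univ.sup G.rank := Finset.le_sup (Finset.mem_univ _)
      omega
    | succ n ih =>
      intro u hu
      rw [trajFinset]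
      by_cases h : G.Terminal u
      · simp [dif_pos h, pathProd_single]
      · rw [dif_neg h]
        have hdisj : ∀ s₁ ∈ (G.children u).attach, ∀ s₂ ∈ (G.children u).attach, s₁ ≠ s₂ →
            Disjoint ((trajFinset G s₁.1).image (List.cons u))
              ((trajFinset G s₂.1).image (List.cons u)) := by
          intro s₁ _ s₂ _ hne
          rw [Finset.disjoint_left]
          rintro τ hτ1 hτ2
          obtain ⟨τ₁, hτ₁, rfl⟩ := Finset.mem_image.mp hτ1
          obtain ⟨τ₂, hτ₂, heq⟩ := Finset.mem_image.mp hτ2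
          have hh₁ := ((mem_trajFinset G s₁.1 τ₁).mp hτ₁).1
          have hh₂ := ((mem_trajFinset G s₂.1 τ₂).mp hτ₂).1
          have : τ₂ = τ₁ := by simpa using heq
          subst this
          apply hne
          apply Subtype.ext
          have := hh₁.symm.trans hh₂
          simpa using this
        rw [Finset.sum_biUnion hdisj]
        have hinner : ∀ s' ∈ (G.children u).attach,
            ∑ τ ∈ (trajFinset G s'.1).image (List.cons u), pathProd pol τ
              = pol u s'.1 := by
          intro s' hs'
          have hedge : G.edge u s'.1 := by
            have := s'.2
            simp only [FinDAG.children, Finset.mem_filter] at this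
            exact this.2
          rw [Finset.sum_image (by intro x _ y _ hxy; simpa using hxy)]
          have hmeas : (Finset.univ.sup G.rank + 1) - G.rank s'.1 ≤ n := by
            have h1 := G.rank_lt hedge
            have h2 : G.rank s'.1 ≤ Finset.univ.sup G.rank := Finset.le_sup (Finset.mem_univ _)
            omega
          have hcongr : ∀ τ' ∈ trajFinset G s'.1,
              pathProd pol (u :: τ') = pol u s'.1 * pathProd pol τ' := by
            intro τ' hτ'
            have hh := ((mem_trajFinset G s'.1 τ').mp hτ').1
            cases τ' with
            | nil => simp at hh
            | cons b t =>
              have hb : b = s'.1 := by simpa using hh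
              subst hb
              rw [pathProd_cons]
          rw [Finset.sum_congr rfl hcongr, ← Finset.mul_sum, ih s'.1 hmeas, mul_one]
        rw [Finset.sum_congr rfl hinner]
        rw [Finset.sum_attach (G.children u) (fun s' => pol u s')]
        exact hpol.sum_one u h
  exact key ((Finset.univ.sup G.rank + 1) - G.rank s) s le_rfl
/-- `V^π₁(s₀) = log Z − KL(q^π ‖ P_B)` where
`q^π(τ) = ∏ π(s_i|s_{i-1})`, `P_B(τ) = (R(x_τ)/Z) ∏ P_B(s_{i-1}|s_i)`, and
`Z = ∑_τ R(x_τ) ∏ P_B`. -/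
theorem value_eq_logZ_sub_KL
    {S : Type} [Fintype S] (G : FinDAG S) (PB : S → S → ℝ) (R : S → ℝ)
    (hPB : G.IsBackward PB) (hR : ∀ x, G.Terminal x → 0 < R x)
    (pol : S → S → ℝ) (hpol : G.IsForward pol)
    (T : Finset (List S)) (hT : ∀ τ, τ ∈ T ↔ G.IsTraj τ)
    (Z : ℝ) (hZ : Z = ∑ τ ∈ T, R (G.lastState τ) * pathProd PB τ) :
    regValue G PB R pol T
      = Real.log Z
        - ∑ τ ∈ T, pathProd pol τ *
            Real.log (pathProd pol τ / (R (G.lastState τ) / Z * pathProd PB τ)) := by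
  have hTe : T = trajFinset G G.s0 := by
    ext τ
    rw [hT τ]
    exact (mem_trajFinset G G.s0 τ).symm
  have hq1 : ∑ τ ∈ T, pathProd pol τ = 1 := by
    rw [hTe]; exact sum_trajFinset G pol hpol G.s0
  -- per-trajectory facts
  have hchain : ∀ τ ∈ T, τ.Chain' G.edge := fun τ hτ => ((hT τ).mp hτ).2.1
  have hterm : ∀ τ ∈ T, G.Terminal (G.lastState τ) := fun τ hτ => ((hT τ).mp hτ).2.2
  have hqpos : ∀ τ ∈ T, 0 < pathProd pol τ :=
    fun τ hτ => pathProd_pos G pol hpol.pos τ (hchain τ hτ)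
  have hppos : ∀ τ ∈ T, 0 < pathProd PB τ :=
    fun τ hτ => pathProd_pos G PB hPB.pos τ (hchain τ hτ)
  have hRpos : ∀ τ ∈ T, 0 < R (G.lastState τ) := fun τ hτ => hR _ (hterm τ hτ)
  have hTne : T.Nonempty := by
    rcases Finset.eq_empty_or_nonempty T with h | h
    · rw [h] at hq1; simp at hq1
    · exact h
  have hZpos : 0 < Z := by
    rw [hZ]
    exact Finset.sum_pos (fun τ hτ => mul_pos (hRpos τ hτ) (hppos τ hτ)) hTne
  -- rewrite the LHS
  have hLHS : regValue G PB R pol T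
      = ∑ τ ∈ T, pathProd pol τ *
          ((Real.log (pathProd PB τ) + Real.log (R (G.lastState τ)))
            - Real.log (pathProd pol τ)) := by
    unfold regValue
    refine Finset.sum_congr rfl fun τ hτ => ?_
    rw [pathSum_log G PB hPB.pos τ (hchain τ hτ)]
  -- rewrite the KL sum
  have hKL : ∑ τ ∈ T, pathProd pol τ *
        Real.log (pathProd pol τ / (R (G.lastState τ) / Z * pathProd PB τ))
      = (∑ τ ∈ T, pathProd pol τ *
          (Real.log (pathProd pol τ) - Real.log (R (G.lastState τ))
            - Real.log (pathProd PB τ)))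
        + (∑ τ ∈ T, pathProd pol τ) * Real.log Z := by
    rw [Finset.sum_mul, ← Finset.sum_add_distrib]
    refine Finset.sum_congr rfl fun τ hτ => ?_
    rw [Real.log_div (ne_of_gt (hqpos τ hτ))
        (ne_of_gt (mul_pos (div_pos (hRpos τ hτ) hZpos) (hppos τ hτ))),
      Real.log_mul (ne_of_gt (div_pos (hRpos τ hτ) hZpos)) (ne_of_gt (hppos τ hτ)),
      Real.log_div (ne_of_gt (hRpos τ hτ)) (ne_of_gt hZpos)]
    ring
  rw [hLHS, hKL, hq1, one_mul]
  have hzero : (∑ τ ∈ T, pathProd pol τ *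
        ((Real.log (pathProd PB τ) + Real.log (R (G.lastState τ)))
          - Real.log (pathProd pol τ)))
      + (∑ τ ∈ T, pathProd pol τ *
          (Real.log (pathProd pol τ) - Real.log (R (G.lastState τ))
            - Real.log (pathProd PB τ))) = 0 := by
    rw [← Finset.sum_add_distrib]
    exact Finset.sum_eq_zero fun τ _ => by ring
  linarith
end
end

section
/- In a tree-structured DAG, for every terminal state x there is exactly one complete trajectory from s₀ to x; in a general DAG with n(x) ≥ 1 distinct complete trajectories to x, the policy maximizing the entropy-regularized objective with only terminal rewards log R(x) (and zero intermediate rewards) samples terminal state x with probability proportional to n-weighted mass Σ over trajectories, which for the uniform-trajectory-optimal solution equals n(x)R(x)/Σ_y n(y)R(y); hence MaxEnt RL without the log P_B intermediate rewards is biased by the factor n(x) whenever n is non-constant. -/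
/- Common setup: finite DAGs, policies, trajectories, GFlowNet notions. -/

noncomputable section
open scoped Classical
open Finset Real

variable {S : Type} [Fintype S]

set_option linter.unusedSectionVars false
set_option linter.unusedVariables false
set_option maxHeartbeats 1000000

theorem getLastD_congr {l : List S} (h : l ≠ []) (a b : S) : l.getLastD a = l.getLastD b := by
  rw [List.getLastD_eq_getLast?, List.getLastD_eq_getLast?, List.getLast?_eq_getLast h]
  rfl

theorem getLastD_concat (l : List S) (a d : S) : (l ++ [a]).getLastD d = a := by
  induction l generalizing d with
  | nil => rfl
  | cons b l ih => rw [List.cons_append, List.getLastD_cons]; exact ih b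

def STraj (G : FinDAG S) (s : S) : Finset (List S) :=
  if G.Terminal s then {[s]}
  else (G.children s).attach.biUnion fun s' => (STraj G s'.1).image (s :: ·)
termination_by (Finset.univ.sup G.rank) + 1 - G.rank s
decreasing_by
  have h1 : G.rank s < G.rank s'.1 := G.rank_lt (Finset.mem_filter.mp s'.2).2
  have h2 : G.rank s'.1 ≤ Finset.univ.sup G.rank := Finset.le_sup (Finset.mem_univ _)
  omega

theorem mem_ST_iff (G : FinDAG S) (s : S) (τ : List S) :
    τ ∈ STraj G s ↔ τ.head? = some s ∧ τ.Chain' G.edge ∧ G.Terminal (τ.getLastD G.s0) := by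
  rw [STraj]
  split_ifs with h
  · simp only [Finset.mem_singleton]
    constructor
    · rintro rfl; exact ⟨rfl, List.isChain_singleton s, h⟩
    · rintro ⟨h1, h2, h3⟩
      match τ with
      | [] => simp at h1
      | [a] => simp at h1; rw [h1]
      | a :: b :: l =>
        simp at h1; subst h1
        exact absurd (List.isChain_cons_cons.mp h2).1 (h b)
  · constructor
    · intro hm
      simp only [Finset.mem_biUnion, Finset.mem_attach, Finset.mem_image, true_and] at hm
      obtain ⟨⟨s', hs'⟩, τ', hτ', rfl⟩ := hm
      have hs'e : G.edge s s' := (Finset.mem_filter.mp hs').2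
      obtain ⟨h1, h2, h3⟩ := (mem_ST_iff G s' τ').mp hτ'
      have hne : τ' ≠ [] := by intro e; rw [e] at h1; simp at h1
      refine ⟨rfl, List.isChain_cons.mpr ⟨?_, h2⟩, ?_⟩
      · intro y hy; rw [h1] at hy; injection hy with hy; rwa [hy] at hs'e
      · rw [List.getLastD_cons, getLastD_congr hne s G.s0]; exact h3
    · rintro ⟨h1, h2, h3⟩
      match τ with
      | [] => simp at h1
      | [a] =>
        simp at h1; subst h1
        exact absurd h3 h
      | a :: b :: l =>
        have ha : a = s := by simpa using h1
        have he : G.edge s b := by rw [← ha]; exact (List.isChain_cons_cons.mp h2).1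
        have hmem : (b :: l) ∈ STraj G b := by
          refine (mem_ST_iff G b (b :: l)).mpr ⟨rfl, (List.isChain_cons_cons.mp h2).2, ?_⟩
          rw [List.getLastD_cons] at h3
          rwa [getLastD_congr (l := b :: l) (by simp) G.s0 a]
        simp only [Finset.mem_biUnion, Finset.mem_attach, Finset.mem_image, true_and]
        exact ⟨⟨b, Finset.mem_filter.mpr ⟨Finset.mem_univ _, he⟩⟩, b :: l, hmem, by rw [ha]⟩
termination_by (Finset.univ.sup G.rank) + 1 - G.rank s
decreasing_by
  all_goals
    first
    | (have h1 : G.rank s < G.rank s' := G.rank_lt hs'e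
       have h2 : G.rank s' ≤ Finset.univ.sup G.rank := Finset.le_sup (Finset.mem_univ _)
       omega)
    | (have h1 : G.rank s < G.rank b := G.rank_lt he
       have h2 : G.rank b ≤ Finset.univ.sup G.rank := Finset.le_sup (Finset.mem_univ _)
       omega)

theorem children_nonempty (G : FinDAG S) {s : S} (h : ¬ G.Terminal s) :
    (G.children s).Nonempty := by
  rw [FinDAG.Terminal] at h; push_neg at h
  obtain ⟨s', hs'⟩ := h
  exact ⟨s', Finset.mem_filter.mpr ⟨Finset.mem_univ _, hs'⟩⟩

theorem exp_V_eq (G : FinDAG S) (R : S → ℝ) (hR : ∀ x, G.Terminal x → 0 < R x)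
    (V : S → ℝ) (hV : G.IsSoftValue (fun _ _ => 1) R V) {s : S} (h : ¬ G.Terminal s) :
    Real.exp (V s) = ∑ s' ∈ G.children s, Real.exp (V s') := by
  rw [hV.2 s h, Real.exp_log]
  · simp
  · have hpos : ∀ s' ∈ G.children s, (0:ℝ) < Real.exp (Real.log 1 + V s') :=
      fun s' _ => Real.exp_pos _
    exact Finset.sum_pos hpos (children_nonempty G h)

theorem sum_STraj (G : FinDAG S) (R : S → ℝ) (hR : ∀ x, G.Terminal x → 0 < R x)
    (V : S → ℝ) (hV : G.IsSoftValue (fun _ _ => 1) R V) (s : S) :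
    ∑ τ ∈ STraj G s, R (τ.getLastD G.s0) = Real.exp (V s) := by
  by_cases h : G.Terminal s
  · have hst : STraj G s = {[s]} := by
      ext τ
      rw [mem_ST_iff, Finset.mem_singleton]
      constructor
      · rintro ⟨h1, h2, h3⟩
        match τ with
        | [] => simp at h1
        | [a] => simp at h1; rw [h1]
        | a :: b :: l =>
          simp at h1; subst h1
          exact absurd (List.isChain_cons_cons.mp h2).1 (h b)
      · rintro rfl; exact ⟨rfl, List.isChain_singleton s, h⟩
    rw [hst, Finset.sum_singleton]
    simp only [List.getLastD]
    rw [hV.1 s h, Real.exp_log (hR s h)]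
    simp
  · have hst : STraj G s = (G.children s).attach.biUnion
        fun s' => (STraj G s'.1).image (s :: ·) := by
      ext τ
      rw [mem_ST_iff]
      constructor
      · rintro ⟨h1, h2, h3⟩
        match τ with
        | [] => simp at h1
        | [a] => simp at h1; subst h1; exact absurd h3 h
        | a :: b :: l =>
          have ha : a = s := by simpa using h1
          have he : G.edge s b := by rw [← ha]; exact (List.isChain_cons_cons.mp h2).1
          have hmem : (b :: l) ∈ STraj G b := by
            refine (mem_ST_iff G b (b :: l)).mpr ⟨rfl, (List.isChain_cons_cons.mp h2).2, ?_⟩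
            rw [List.getLastD_cons] at h3
            rwa [getLastD_congr (l := b :: l) (by simp) G.s0 a]
          simp only [Finset.mem_biUnion, Finset.mem_attach, Finset.mem_image, true_and]
          exact ⟨⟨b, Finset.mem_filter.mpr ⟨Finset.mem_univ _, he⟩⟩, b :: l, hmem, by rw [ha]⟩
      · intro hm
        simp only [Finset.mem_biUnion, Finset.mem_attach, Finset.mem_image, true_and] at hm
        obtain ⟨⟨s', hs'⟩, τ', hτ', rfl⟩ := hm
        have hs'e : G.edge s s' := (Finset.mem_filter.mp hs').2
        obtain ⟨h1, h2, h3⟩ := (mem_ST_iff G s' τ').mp hτ'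
        have hne : τ' ≠ [] := by intro e; rw [e] at h1; simp at h1
        refine ⟨rfl, List.isChain_cons.mpr ⟨?_, h2⟩, ?_⟩
        · intro y hy; rw [h1] at hy; injection hy with hy; rwa [hy] at hs'e
        · rw [List.getLastD_cons, getLastD_congr hne s G.s0]; exact h3
    rw [hst]
    rw [Finset.sum_biUnion]
    · have key : ∀ s' : {x // x ∈ G.children s},
          ∑ τ ∈ (STraj G s'.1).image (s :: ·), R (τ.getLastD G.s0) = Real.exp (V s'.1) := by
        rintro ⟨s', hs'⟩
        rw [Finset.sum_image (fun x _ y _ hxy => by injection hxy)]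
        rw [← sum_STraj G R hR V hV s']
        refine Finset.sum_congr rfl fun τ' hτ' => ?_
        have hne : τ' ≠ [] := by
          intro e
          have h1 := ((mem_ST_iff G s' τ').mp hτ').1
          rw [e] at h1; simp at h1
        rw [List.getLastD_cons, getLastD_congr hne s G.s0]
      rw [Finset.sum_congr rfl fun s' _ => key s']
      rw [Finset.sum_attach (G.children s) fun s' => Real.exp (V s')]
      exact (exp_V_eq G R hR V hV h).symm
    · intro a ha b hb hab
      refine Finset.disjoint_left.mpr ?_
      intro τ hτa hτb
      obtain ⟨τa, hτa', rfl⟩ := Finset.mem_image.mp hτa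
      obtain ⟨τb, hτb', heq⟩ := Finset.mem_image.mp hτb
      have hba : τb = τa := by injection heq
      subst hba
      have h1 := ((mem_ST_iff G a.1 τb).mp hτa').1
      have h2 := ((mem_ST_iff G b.1 τb).mp hτb').1
      rw [h1] at h2
      exact hab (Subtype.ext (by injection h2))
termination_by (Finset.univ.sup G.rank) + 1 - G.rank s
decreasing_by
  have h1 : G.rank s < G.rank s' := G.rank_lt (Finset.mem_filter.mp hs').2
  have h2 : G.rank s' ≤ Finset.univ.sup G.rank := Finset.le_sup (Finset.mem_univ _)
  omega

theorem pathProd_cons_cons (f : S → S → ℝ) (a b : S) (l : List S) :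
    pathProd f (a :: b :: l) = f a b * pathProd f (b :: l) := by
  simp [pathProd]

theorem telescope (G : FinDAG S) (V : S → ℝ) :
    ∀ (τ : List S) (a : S), τ.Chain' G.edge → τ.head? = some a →
      pathProd (G.softOpt (fun _ _ => 1) V) τ
        = Real.exp (V (τ.getLastD G.s0) - V a) := by
  intro τ
  induction τ with
  | nil => intro a _ h; simp at h
  | cons b l ih =>
    intro a hc hh
    have hb : b = a := by simpa using hh
    subst hb
    match l with
    | [] => simp [pathProd, List.getLastD]
    | c :: l' =>
      have he : G.edge b c := (List.isChain_cons_cons.mp hc).1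
      rw [pathProd_cons_cons]
      rw [ih c (List.isChain_cons_cons.mp hc).2 rfl]
      rw [FinDAG.softOpt, if_pos he]
      simp only [List.getLastD_cons]
      rw [← Real.exp_add, Real.log_one]
      congr 1
      ring

theorem tree_exists (G : FinDAG S)
    (h1 : ∀ s, s ≠ G.s0 → (G.parents s).card = 1) (h2 : G.parents G.s0 = ∅) :
    ∀ n x, G.rank x ≤ n →
      ∃ τ : List S, τ.head? = some G.s0 ∧ τ.Chain' G.edge ∧ τ.getLastD G.s0 = x := by
  intro n
  induction n with
  | zero =>
    intro x hx
    by_cases hxs : x = G.s0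
    · exact ⟨[G.s0], rfl, List.isChain_singleton _, by simp [List.getLastD, hxs]⟩
    · obtain ⟨p, hp⟩ := Finset.card_eq_one.mp (h1 x hxs)
      have hpe : G.edge p x := by
        have hm : p ∈ G.parents x := by rw [hp]; exact Finset.mem_singleton_self p
        exact (Finset.mem_filter.mp hm).2
      exact absurd (G.rank_lt hpe) (by omega)
  | succ n ih =>
    intro x hx
    by_cases hxs : x = G.s0
    · exact ⟨[G.s0], rfl, List.isChain_singleton _, by simp [List.getLastD, hxs]⟩
    · obtain ⟨p, hp⟩ := Finset.card_eq_one.mp (h1 x hxs)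
      have hpe : G.edge p x := by
        have hm : p ∈ G.parents x := by rw [hp]; exact Finset.mem_singleton_self p
        exact (Finset.mem_filter.mp hm).2
      have hrp : G.rank p ≤ n := by have := G.rank_lt hpe; omega
      obtain ⟨τ, hh, hc, hl⟩ := ih p hrp
      have hne : τ ≠ [] := by intro e; rw [e] at hh; simp at hh
      refine ⟨τ ++ [x], ?_, ?_, by rw [getLastD_concat]⟩
      · rwa [List.head?_append_of_ne_nil _ hne]
      · apply List.isChain_append.mpr
        refine ⟨hc, List.isChain_singleton _, ?_⟩
        intro y hy z hz
        simp at hz; subst hz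
        have hyp : y = p := by
          rw [List.getLastD_eq_getLast?] at hl
          rw [hy] at hl
          simpa using hl
        rwa [hyp]

theorem tree_unique (G : FinDAG S)
    (h1 : ∀ s, s ≠ G.s0 → (G.parents s).card = 1) (h2 : G.parents G.s0 = ∅) :
    ∀ n (τ1 τ2 : List S), τ1.length ≤ n →
      τ1.head? = some G.s0 → τ1.Chain' G.edge →
      τ2.head? = some G.s0 → τ2.Chain' G.edge →
      τ1.getLastD G.s0 = τ2.getLastD G.s0 → τ1 = τ2 := by
  intro n
  induction n with
  | zero =>
    intro τ1 τ2 hlen hh1 _ _ _ _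
    interval_cases h : τ1.length
    · rw [List.length_eq_zero_iff] at h; rw [h] at hh1; simp at hh1
  | succ n ih =>
    intro τ1 τ2 hlen hh1 hc1 hh2 hc2 hlast
    rcases List.eq_nil_or_concat τ1 with h | ⟨l1, x1, rfl⟩
    · rw [h] at hh1; simp at hh1
    rcases List.eq_nil_or_concat τ2 with h | ⟨l2, x2, rfl⟩
    · rw [h] at hh2; simp at hh2
    simp only [List.concat_eq_append] at *
    rw [getLastD_concat, getLastD_concat] at hlast
    subst hlast
    rcases eq_or_ne l1 [] with rfl | hl1
    · have hx1 : x1 = G.s0 := by simpa using hh1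
      subst hx1
      rcases eq_or_ne l2 [] with rfl | hl2
      · rfl
      · exfalso
        obtain ⟨_, _, hlink⟩ := List.isChain_append.mp hc2
        have he := hlink (l2.getLast hl2) (List.getLast?_eq_getLast hl2 ▸ rfl) G.s0 rfl
        have hm : l2.getLast hl2 ∈ G.parents G.s0 :=
          Finset.mem_filter.mpr ⟨Finset.mem_univ _, he⟩
        rw [h2] at hm; exact absurd hm (Finset.notMem_empty _)
    · obtain ⟨hcl1, _, hlink1⟩ := List.isChain_append.mp hc1
      have hp1 : G.edge (l1.getLast hl1) x1 :=
        hlink1 _ (List.getLast?_eq_getLast hl1 ▸ rfl) x1 rfl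
      have hx1ne : x1 ≠ G.s0 := by
        intro e; subst e
        have hm : l1.getLast hl1 ∈ G.parents G.s0 :=
          Finset.mem_filter.mpr ⟨Finset.mem_univ _, hp1⟩
        rw [h2] at hm; exact absurd hm (Finset.notMem_empty _)
      rcases eq_or_ne l2 [] with rfl | hl2
      · exact absurd (by simpa using hh2) hx1ne
      obtain ⟨hcl2, _, hlink2⟩ := List.isChain_append.mp hc2
      have hp2 : G.edge (l2.getLast hl2) x1 :=
        hlink2 _ (List.getLast?_eq_getLast hl2 ▸ rfl) x1 rfl
      obtain ⟨p, hp⟩ := Finset.card_eq_one.mp (h1 x1 hx1ne)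
      have e1 : l1.getLast hl1 = p := by
        have hm : l1.getLast hl1 ∈ G.parents x1 :=
          Finset.mem_filter.mpr ⟨Finset.mem_univ _, hp1⟩
        rw [hp] at hm; simpa using hm
      have e2 : l2.getLast hl2 = p := by
        have hm : l2.getLast hl2 ∈ G.parents x1 :=
          Finset.mem_filter.mpr ⟨Finset.mem_univ _, hp2⟩
        rw [hp] at hm; simpa using hm
      have hll : l1 = l2 := by
        refine ih l1 l2 ?_ ?_ hcl1 ?_ hcl2 ?_
        · have hlen' : l1.length + 1 ≤ n + 1 := by simpa using hlen
          omega
        · rwa [List.head?_append_of_ne_nil _ hl1] at hh1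
        · rwa [List.head?_append_of_ne_nil _ hl2] at hh2
        · rw [List.getLastD_eq_getLast?, List.getLastD_eq_getLast?,
            List.getLast?_eq_getLast hl1, List.getLast?_eq_getLast hl2]
          simp [e1, e2]
      rw [hll]

/-- (i) In a tree-structured DAG there is exactly one complete
trajectory to each terminal state. (ii) In a general DAG, the optimal
entropy-regularized (λ = 1) policy for the MDP with zero intermediate rewards and
terminal rewards `log R(x)` (encoded as the soft value for the trivial backward policy
`P_B ≡ 1`) samples terminal state `x` with probability `n(x)R(x)/∑_y n(y)R(y)`, where
`n(x)` is the number of distinct complete trajectories to `x`; hence MaxEnt RL without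
the `log P_B` intermediate rewards is biased by the factor `n(x)`. -/
theorem maxent_without_PB_is_biased_by_path_count
    {S : Type} [Fintype S] (G : FinDAG S)
    (R : S → ℝ) (hR : ∀ x, G.Terminal x → 0 < R x)
    (V : S → ℝ) (hV : G.IsSoftValue (fun _ _ => 1) R V)
    (T : Finset (List S)) (hT : ∀ τ, τ ∈ T ↔ G.IsTraj τ) :
    (((∀ s, s ≠ G.s0 → (G.parents s).card = 1) ∧ G.parents G.s0 = ∅) →
      ∀ x ∈ G.X, (T.filter (fun τ => G.lastState τ = x)).card = 1) ∧
    (∀ x ∈ G.X,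
      ∑ τ ∈ T.filter (fun τ => G.lastState τ = x),
          pathProd (G.softOpt (fun _ _ => 1) V) τ
        = ((T.filter (fun τ => G.lastState τ = x)).card : ℝ) * R x /
            ∑ y ∈ G.X, ((T.filter (fun τ => G.lastState τ = y)).card : ℝ) * R y) := by
  have hTS : T = STraj G G.s0 := by
    ext τ
    rw [hT, mem_ST_iff]
    exact Iff.rfl
  have hmaps : ∀ τ ∈ T, G.lastState τ ∈ G.X := by
    intro τ hτ
    obtain ⟨_, _, h3⟩ := (hT τ).mp hτ
    exact Finset.mem_filter.mpr ⟨Finset.mem_univ _, h3⟩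
  have hD : ∑ y ∈ G.X, ((T.filter (fun τ => G.lastState τ = y)).card : ℝ) * R y
      = Real.exp (V G.s0) := by
    have step1 : ∀ y ∈ G.X,
        ((T.filter (fun τ => G.lastState τ = y)).card : ℝ) * R y
          = ∑ τ ∈ T.filter (fun τ => G.lastState τ = y), R (G.lastState τ) := by
      intro y hy
      rw [Finset.sum_congr rfl (fun τ hτ => by
        rw [(Finset.mem_filter.mp hτ).2])]
      rw [Finset.sum_const, nsmul_eq_mul]
    rw [Finset.sum_congr rfl step1,
      Finset.sum_fiberwise_of_maps_to hmaps (fun τ => R (G.lastState τ))]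
    rw [hTS]
    exact sum_STraj G R hR V hV G.s0
  constructor
  · rintro ⟨h1, h2⟩ x hx
    have hterm : G.Terminal x := (Finset.mem_filter.mp hx).2
    obtain ⟨τ0, hh0, hc0, hl0⟩ := tree_exists G h1 h2 (G.rank x) x le_rfl
    rw [Finset.card_eq_one]
    refine ⟨τ0, ?_⟩
    ext τ
    rw [Finset.mem_filter, Finset.mem_singleton]
    constructor
    · rintro ⟨hτT, hτx⟩
      obtain ⟨hh, hc, _⟩ := (hT τ).mp hτT
      exact tree_unique G h1 h2 τ.length τ τ0 le_rfl hh hc hh0 hc0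
        (by rw [hl0]; exact hτx)
    · rintro rfl
      refine ⟨(hT _).mpr ⟨hh0, hc0, ?_⟩, hl0⟩
      rw [hl0]; exact hterm
  · intro x hx
    have hterm : G.Terminal x := (Finset.mem_filter.mp hx).2
    have hRx : Real.exp (V x) = R x := by
      rw [hV.1 x hterm, Real.exp_log (hR x hterm)]
    have step : ∀ τ ∈ T.filter (fun τ => G.lastState τ = x),
        pathProd (G.softOpt (fun _ _ => 1) V) τ = R x / Real.exp (V G.s0) := by
      intro τ hτ
      obtain ⟨hτT, hτx⟩ := Finset.mem_filter.mp hτ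
      obtain ⟨hh, hc, _⟩ := (hT τ).mp hτT
      rw [telescope G V τ G.s0 hc hh]
      rw [show τ.getLastD G.s0 = x from hτx]
      rw [Real.exp_sub, hRx]
    rw [Finset.sum_congr rfl step, Finset.sum_const, nsmul_eq_mul, hD]
    rw [mul_div_assoc]
end
end
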